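/- arXiv:2103.17247 — 7 statements merged into one kernel-verified Lean document; each statement's English description precedes it below -/
import Mathlib

section
/- Let w₁, …, w_M be vectors in ℝ^(D+1) and let C = {∑ᵢ λᵢ wᵢ : λᵢ ≥ 0} be the convex cone they generate. Let b ∈ ℝ^(D+1), b ≠ 0, be a facet normal vector of C, i.e. ⟨wᵢ, b⟩ ≤ 0 for all i and the linear span of {wᵢ : ⟨wᵢ, b⟩ = 0} has dimension D. Let T : ℝ^K → ℝ^(D+1) be an injective linear map whose range contains b, and let b̃ ∈ ℝ^K be the unique vector with T b̃ = b. Define w̃ᵢ = T* wᵢ ∈ ℝ^K, where T* denotes the adjoint (transpose) of T with respect to the standard inner products. Then ⟨w̃ᵢ, b̃⟩ ≤ 0 for all i, and the linear span of {w̃ᵢ : ⟨w̃ᵢ, b̃⟩ = 0} has dimension K − 1; that is, b̃ is a facet normal vector of the convex cone C̃ generated by w̃₁, …, w̃_M. -/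
open RealInnerProductSpace

/-- Cone-projection theorem: if `b` is a facet normal vector of the cone generated by
the `w i` in `ℝ^(D+1)` (i.e. `⟪w i, b⟫ ≤ 0` for all `i` and the generators attaining
equality span a subspace of dimension `D`), `T : ℝ^K → ℝ^(D+1)` is injective and
`T bt = b`, then `bt` is a facet normal vector of the cone generated by the projected
rays `T* (w i)` in `ℝ^K`. -/
theorem cone_projection_facet
    (D K M : ℕ)
    (w : Fin M → EuclideanSpace ℝ (Fin (D + 1)))
    (b : EuclideanSpace ℝ (Fin (D + 1)))
    (hb0 : b ≠ 0)
    (hneg : ∀ i, ⟪w i, b⟫ ≤ 0)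
    (hfacet : Module.finrank ℝ
      (Submodule.span ℝ {v : EuclideanSpace ℝ (Fin (D + 1)) |
        ∃ i, v = w i ∧ ⟪w i, b⟫ = 0}) = D)
    (T : EuclideanSpace ℝ (Fin K) →ₗ[ℝ] EuclideanSpace ℝ (Fin (D + 1)))
    (hT : Function.Injective T)
    (bt : EuclideanSpace ℝ (Fin K))
    (hTb : T bt = b) :
    (∀ i, ⟪LinearMap.adjoint T (w i), bt⟫ ≤ 0) ∧
    Module.finrank ℝ
      (Submodule.span ℝ {v : EuclideanSpace ℝ (Fin K) |
        ∃ i, v = LinearMap.adjoint T (w i) ∧ ⟪LinearMap.adjoint T (w i), bt⟫ = 0}) = K - 1 := by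
  set A := LinearMap.adjoint T with hA
  have key : ∀ i, ⟪A (w i), bt⟫ = ⟪w i, b⟫ := fun i => by
    rw [hA, LinearMap.adjoint_inner_left, hTb]
  refine ⟨fun i => by rw [key]; exact hneg i, ?_⟩
  -- the set in ℝ^K is the image under A of the set in ℝ^(D+1)
  have hset : {v : EuclideanSpace ℝ (Fin K) |
      ∃ i, v = A (w i) ∧ ⟪A (w i), bt⟫ = 0} =
      A '' {v : EuclideanSpace ℝ (Fin (D + 1)) | ∃ i, v = w i ∧ ⟪w i, b⟫ = 0} := by
    ext v
    constructor
    · rintro ⟨i, rfl, h⟩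
      exact ⟨w i, ⟨i, rfl, by rw [← key]; exact h⟩, rfl⟩
    · rintro ⟨u, ⟨i, rfl, h⟩, rfl⟩
      exact ⟨i, rfl, by rw [key]; exact h⟩
  set S : Set (EuclideanSpace ℝ (Fin (D + 1))) :=
    {v | ∃ i, v = w i ∧ ⟪w i, b⟫ = 0} with hS
  -- span S = (ℝ ∙ b)ᗮ
  have hdim : Module.finrank ℝ (EuclideanSpace ℝ (Fin (D + 1))) = D + 1 :=
    finrank_euclideanSpace_fin
  have hperp : Module.finrank ℝ ((ℝ ∙ b)ᗮ : Submodule ℝ (EuclideanSpace ℝ (Fin (D + 1)))) = D := by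
    have h1 := Submodule.finrank_add_finrank_orthogonal (K := (ℝ ∙ b))
    rw [finrank_span_singleton hb0, hdim] at h1
    omega
  have hspanS : Submodule.span ℝ S = (ℝ ∙ b)ᗮ := by
    apply Submodule.eq_of_le_of_finrank_eq
    · rw [Submodule.span_le]
      rintro v ⟨i, rfl, h⟩
      simp only [SetLike.mem_coe, Submodule.mem_orthogonal_singleton_iff_inner_right]
      rwa [real_inner_comm] at h
    · rw [hfacet, hperp]
  -- ker A = (range T)ᗮ
  have hkerA : LinearMap.ker A = (LinearMap.range T)ᗮ := by
    ext v
    simp only [LinearMap.mem_ker, Submodule.mem_orthogonal]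
    constructor
    · rintro h u ⟨x, rfl⟩
      rw [real_inner_comm, ← LinearMap.adjoint_inner_left, ← hA, h, inner_zero_left]
    · intro h
      rw [← inner_self_eq_zero (𝕜 := ℝ)]
      rw [hA, LinearMap.adjoint_inner_left, real_inner_comm]
      exact h _ ⟨_, rfl⟩
  have hrangeT : Module.finrank ℝ (LinearMap.range T) = K := by
    rw [LinearMap.finrank_range_of_inj hT, finrank_euclideanSpace_fin]
  have hkerdim : Module.finrank ℝ (LinearMap.ker A) = D + 1 - K := by
    rw [hkerA]
    have h1 := Submodule.finrank_add_finrank_orthogonal (K := LinearMap.range T)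
    rw [hrangeT, hdim] at h1
    omega
  have hKle : K ≤ D + 1 := by
    have := LinearMap.finrank_le_finrank_of_injective hT
    rwa [finrank_euclideanSpace_fin, finrank_euclideanSpace_fin] at this
  -- ker A ≤ (ℝ ∙ b)ᗮ
  have hkerle : LinearMap.ker A ≤ (ℝ ∙ b)ᗮ := by
    rw [hkerA]
    apply Submodule.orthogonal_le
    rw [Submodule.span_singleton_le_iff_mem]
    exact ⟨bt, hTb⟩
  -- rank-nullity for A restricted to (ℝ ∙ b)ᗮ
  set p : Submodule ℝ (EuclideanSpace ℝ (Fin (D + 1))) := (ℝ ∙ b)ᗮ with hp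
  have hrn := LinearMap.finrank_range_add_finrank_ker (A.domRestrict p)
  rw [LinearMap.range_domRestrict, LinearMap.ker_domRestrict] at hrn
  have hkerres : Module.finrank ℝ (Submodule.comap p.subtype (LinearMap.ker A)) =
      Module.finrank ℝ (LinearMap.ker A) :=
    (Submodule.comapSubtypeEquivOfLe hkerle).finrank_eq
  rw [hkerres, hkerdim, hperp] at hrn
  rw [hset, Submodule.span_image, hspanS]
  omega
end

section
/- For all real numbers a₁, a₂, a₃, b₁, b₂, b₃ each belonging to {−1, 1}, the I3322 expression satisfies a₁ − a₂ + b₁ − b₂ − (a₁ − a₂)(b₁ − b₂) + (a₁ + a₂)b₃ + a₃(b₁ + b₂) ≤ 4. -/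
/-- The I3322 inequality holds for deterministic ±1 assignments. -/
theorem i3322_inequality
    (a₁ a₂ a₃ b₁ b₂ b₃ : ℝ)
    (ha₁ : a₁ = 1 ∨ a₁ = -1) (ha₂ : a₂ = 1 ∨ a₂ = -1) (ha₃ : a₃ = 1 ∨ a₃ = -1)
    (hb₁ : b₁ = 1 ∨ b₁ = -1) (hb₂ : b₂ = 1 ∨ b₂ = -1) (hb₃ : b₃ = 1 ∨ b₃ = -1) :
    a₁ - a₂ + b₁ - b₂ - (a₁ - a₂) * (b₁ - b₂) + (a₁ + a₂) * b₃ + a₃ * (b₁ + b₂) ≤ 4 := by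
  rcases ha₁ with rfl | rfl <;> rcases ha₂ with rfl | rfl <;> rcases ha₃ with rfl | rfl <;>
    rcases hb₁ with rfl | rfl <;> rcases hb₂ with rfl | rfl <;> rcases hb₃ with rfl | rfl <;> norm_num
end

section
/- For all real numbers a₁, a₂, a₃, a₄, b₁, b₂, b₃, b₄ each belonging to {−1, 1}, the I4422 expression satisfies 2(a₁ + b₁) + 2(a₂ + b₂) + (a₃ + b₃) − a₁b₁ − (a₁b₂ + a₂b₁) − (a₁b₃ + a₃b₁) − (a₁b₄ + a₄b₁) − a₂b₂ − (a₂b₃ + a₃b₂) + (a₂b₄ + a₄b₂) + a₃b₃ ≤ 7. -/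
/-- The I4422 inequality holds for deterministic ±1 assignments. -/
theorem i4422_inequality
    (a₁ a₂ a₃ a₄ b₁ b₂ b₃ b₄ : ℝ)
    (ha₁ : a₁ = 1 ∨ a₁ = -1) (ha₂ : a₂ = 1 ∨ a₂ = -1)
    (ha₃ : a₃ = 1 ∨ a₃ = -1) (ha₄ : a₄ = 1 ∨ a₄ = -1)
    (hb₁ : b₁ = 1 ∨ b₁ = -1) (hb₂ : b₂ = 1 ∨ b₂ = -1)
    (hb₃ : b₃ = 1 ∨ b₃ = -1) (hb₄ : b₄ = 1 ∨ b₄ = -1) :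
    2 * (a₁ + b₁) + 2 * (a₂ + b₂) + (a₃ + b₃) - a₁ * b₁ - (a₁ * b₂ + a₂ * b₁)
      - (a₁ * b₃ + a₃ * b₁) - (a₁ * b₄ + a₄ * b₁) - a₂ * b₂ - (a₂ * b₃ + a₃ * b₂)
      + (a₂ * b₄ + a₄ * b₂) + a₃ * b₃ ≤ 7 := by
  rcases ha₁ with rfl|rfl <;> rcases ha₂ with rfl|rfl <;> rcases ha₃ with rfl|rfl <;> rcases ha₄ with rfl|rfl <;> rcases hb₁ with rfl|rfl <;> rcases hb₂ with rfl|rfl <;> rcases hb₃ with rfl|rfl <;> rcases hb₄ with rfl|rfl <;> norm_num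
end

section
/- For all real numbers aᵢ, bᵢ, cᵢ ∈ {−1, 1} (i = 1, 2, 3), with the convention a₀ = b₀ = c₀ = 1, the following inequality holds: 8(100) − 4(110) + 3(111) + 4(200) − 3(210) + 2(211) − (220) + 2(221) − 2(222) − (300) − (310) + 3(311) + 2(320) − (321) + (322) − (331) − (333) ≤ 21. -/
/-- `(ijk)`: the sum of `a x * b y * c z` over all distinct triples `(x, y, z)`
obtained by permuting `(i, j, k)` among the three parties. -/
def symCorr (a b c : ℕ → ℝ) (i j k : ℕ) : ℝ :=
  ∑ p ∈ ({(i, j, k), (i, k, j), (j, i, k), (j, k, i), (k, i, j), (k, j, i)} :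
      Finset (ℕ × ℕ × ℕ)),
    a p.1 * b p.2.1 * c p.2.2

set_option maxHeartbeats 4000000 in
lemma i3322_key (a1 a2 a3 b1 b2 b3 c1 c2 c3 : ℝ)
    (ha1 : a1 = 1 ∨ a1 = -1) (ha2 : a2 = 1 ∨ a2 = -1) (ha3 : a3 = 1 ∨ a3 = -1)
    (hb1 : b1 = 1 ∨ b1 = -1) (hb2 : b2 = 1 ∨ b2 = -1) (hb3 : b3 = 1 ∨ b3 = -1)
    (hc1 : c1 = 1 ∨ c1 = -1) (hc2 : c2 = 1 ∨ c2 = -1) (hc3 : c3 = 1 ∨ c3 = -1) :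
    (8)*a1 + (-4)*a1*b1 + (3)*a1*b1*c1 + (2)*a1*b1*c2 + (3)*a1*b1*c3 + (-3)*a1*b2 + (2)*a1*b2*c1 + (2)*a1*b2*c2 + (-1)*a1*b2*c3 + (-1)*a1*b3 + (3)*a1*b3*c1 + (-1)*a1*b3*c2 + (-1)*a1*b3*c3 + (-4)*a1*c1 + (-3)*a1*c2 + (-1)*a1*c3 + (4)*a2 + (-3)*a2*b1 + (2)*a2*b1*c1 + (2)*a2*b1*c2 + (-1)*a2*b1*c3 + (-1)*a2*b2 + (2)*a2*b2*c1 + (-2)*a2*b2*c2 + (1)*a2*b2*c3 + (2)*a2*b3 + (-1)*a2*b3*c1 + (1)*a2*b3*c2 + (-3)*a2*c1 + (-1)*a2*c2 + (2)*a2*c3 + (-1)*a3 + (-1)*a3*b1 + (3)*a3*b1*c1 + (-1)*a3*b1*c2 + (-1)*a3*b1*c3 + (2)*a3*b2 + (-1)*a3*b2*c1 + (1)*a3*b2*c2 + (-1)*a3*b3*c1 + (-1)*a3*b3*c3 + (-1)*a3*c1 + (2)*a3*c2 + (8)*b1 + (-4)*b1*c1 + (-3)*b1*c2 + (-1)*b1*c3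 + (4)*b2 + (-3)*b2*c1 + (-1)*b2*c2 + (2)*b2*c3 + (-1)*b3 + (-1)*b3*c1 + (2)*b3*c2 + (8)*c1 + (4)*c2 + (-1)*c3 ≤ 21 := by
  rcases ha1 with rfl|rfl <;> rcases ha2 with rfl|rfl <;> rcases ha3 with rfl|rfl <;>
  rcases hb1 with rfl|rfl <;> rcases hb2 with rfl|rfl <;> rcases hb3 with rfl|rfl <;>
  rcases hc1 with rfl|rfl <;> rcases hc2 with rfl|rfl <;> rcases hc3 with rfl|rfl <;>
  norm_num

/-- Generalization number 1507 of the I3322 inequality: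
`8(100) − 4(110) + 3(111) + 4(200) − 3(210) + 2(211) − (220) + 2(221) − 2(222)
 − (300) − (310) + 3(311) + 2(320) − (321) + (322) − (331) − (333) ≤ 21`
holds for deterministic ±1 assignments (with trivial setting `0` fixed to `+1`). -/
theorem i3322_gen_1507
    (a b c : ℕ → ℝ)
    (ha0 : a 0 = 1) (hb0 : b 0 = 1) (hc0 : c 0 = 1)
    (h : ∀ i, 1 ≤ i → i ≤ 3 →
      (a i = 1 ∨ a i = -1) ∧ (b i = 1 ∨ b i = -1) ∧ (c i = 1 ∨ c i = -1)) :
    8 * symCorr a b c 1 0 0 - 4 * symCorr a b c 1 1 0 + 3 * symCorr a b c 1 1 1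
      + 4 * symCorr a b c 2 0 0 - 3 * symCorr a b c 2 1 0 + 2 * symCorr a b c 2 1 1
      - symCorr a b c 2 2 0 + 2 * symCorr a b c 2 2 1 - 2 * symCorr a b c 2 2 2
      - symCorr a b c 3 0 0 - symCorr a b c 3 1 0 + 3 * symCorr a b c 3 1 1
      + 2 * symCorr a b c 3 2 0 - symCorr a b c 3 2 1 + symCorr a b c 3 2 2
      - symCorr a b c 3 3 1 - symCorr a b c 3 3 3 ≤ 21 := by
  obtain ⟨ha1, hb1, hc1⟩ := h 1 (by norm_num) (by norm_num)
  obtain ⟨ha2, hb2, hc2⟩ := h 2 (by norm_num) (by norm_num)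
  obtain ⟨ha3, hb3, hc3⟩ := h 3 (by norm_num) (by norm_num)
  have key := i3322_key (a 1) (a 2) (a 3) (b 1) (b 2) (b 3) (c 1) (c 2) (c 3)
    ha1 ha2 ha3 hb1 hb2 hb3 hc1 hc2 hc3
  simp only [symCorr]
  norm_num [ha0, hb0, hc0]
  linarith [key]
end

section
/- For all real numbers aᵢ, bᵢ, cᵢ ∈ {−1, 1} (i = 1, 2, 3), with the convention a₀ = b₀ = c₀ = 1, the following inequality holds: 3(100) − (110) − (111) − 4(200) + 2(210) − (220) + (221) + (222) − 3(300) + 2(310) − (320) + (321) − (322) + (331) + (332) ≤ 12. -/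
lemma sc100 (a b c : ℕ → ℝ) : symCorr a b c 1 0 0 = a 0 * b 0 * c 1 + a 0 * b 1 * c 0 + a 1 * b 0 * c 0 := by
  simp [symCorr]; ring

lemma sc110 (a b c : ℕ → ℝ) : symCorr a b c 1 1 0 = a 0 * b 1 * c 1 + a 1 * b 0 * c 1 + a 1 * b 1 * c 0 := by
  simp [symCorr]; ring

lemma sc111 (a b c : ℕ → ℝ) : symCorr a b c 1 1 1 = a 1 * b 1 * c 1 := by
  simp [symCorr]

lemma sc200 (a b c : ℕ → ℝ) : symCorr a b c 2 0 0 = a 0 * b 0 * c 2 + a 0 * b 2 * c 0 + a 2 * b 0 * c 0 := by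
  simp [symCorr]; ring

lemma sc210 (a b c : ℕ → ℝ) : symCorr a b c 2 1 0 = a 0 * b 1 * c 2 + a 0 * b 2 * c 1 + a 1 * b 0 * c 2 + a 1 * b 2 * c 0 + a 2 * b 0 * c 1 + a 2 * b 1 * c 0 := by
  simp [symCorr]; ring

lemma sc220 (a b c : ℕ → ℝ) : symCorr a b c 2 2 0 = a 0 * b 2 * c 2 + a 2 * b 0 * c 2 + a 2 * b 2 * c 0 := by
  simp [symCorr]; ring

lemma sc221 (a b c : ℕ → ℝ) : symCorr a b c 2 2 1 = a 1 * b 2 * c 2 + a 2 * b 1 * c 2 + a 2 * b 2 * c 1 := by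
  simp [symCorr]; ring

lemma sc222 (a b c : ℕ → ℝ) : symCorr a b c 2 2 2 = a 2 * b 2 * c 2 := by
  simp [symCorr]

lemma sc300 (a b c : ℕ → ℝ) : symCorr a b c 3 0 0 = a 0 * b 0 * c 3 + a 0 * b 3 * c 0 + a 3 * b 0 * c 0 := by
  simp [symCorr]; ring

lemma sc310 (a b c : ℕ → ℝ) : symCorr a b c 3 1 0 = a 0 * b 1 * c 3 + a 0 * b 3 * c 1 + a 1 * b 0 * c 3 + a 1 * b 3 * c 0 + a 3 * b 0 * c 1 + a 3 * b 1 * c 0 := by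
  simp [symCorr]; ring

lemma sc320 (a b c : ℕ → ℝ) : symCorr a b c 3 2 0 = a 0 * b 2 * c 3 + a 0 * b 3 * c 2 + a 2 * b 0 * c 3 + a 2 * b 3 * c 0 + a 3 * b 0 * c 2 + a 3 * b 2 * c 0 := by
  simp [symCorr]; ring

lemma sc321 (a b c : ℕ → ℝ) : symCorr a b c 3 2 1 = a 1 * b 2 * c 3 + a 1 * b 3 * c 2 + a 2 * b 1 * c 3 + a 2 * b 3 * c 1 + a 3 * b 1 * c 2 + a 3 * b 2 * c 1 := by
  simp [symCorr]; ring

lemma sc322 (a b c : ℕ → ℝ) : symCorr a b c 3 2 2 = a 2 * b 2 * c 3 + a 2 * b 3 * c 2 + a 3 * b 2 * c 2 := by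
  simp [symCorr]; ring

lemma sc331 (a b c : ℕ → ℝ) : symCorr a b c 3 3 1 = a 1 * b 3 * c 3 + a 3 * b 1 * c 3 + a 3 * b 3 * c 1 := by
  simp [symCorr]; ring

lemma sc332 (a b c : ℕ → ℝ) : symCorr a b c 3 3 2 = a 2 * b 3 * c 3 + a 3 * b 2 * c 3 + a 3 * b 3 * c 2 := by
  simp [symCorr]; ring

set_option maxHeartbeats 3200000 in
lemma key532 (x1 x2 x3 y1 y2 y3 z1 z2 z3 : ℝ)
    (hx1 : x1 = 1 ∨ x1 = -1) (hy1 : y1 = 1 ∨ y1 = -1) (hz1 : z1 = 1 ∨ z1 = -1)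
    (hx2 : x2 = 1 ∨ x2 = -1) (hy2 : y2 = 1 ∨ y2 = -1) (hz2 : z2 = 1 ∨ z2 = -1)
    (hx3 : x3 = 1 ∨ x3 = -1) (hy3 : y3 = 1 ∨ y3 = -1) (hz3 : z3 = 1 ∨ z3 = -1) :
    (3)*z1 + (-4)*z2 + (-3)*z3 + (3)*y1 + (-1)*y1*z1 + (2)*y1*z2 + (2)*y1*z3 + (-4)*y2 + (2)*y2*z1 + (-1)*y2*z2 + (-1)*y2*z3 + (-3)*y3 + (2)*y3*z1 + (-1)*y3*z2 + (3)*x1 + (-1)*x1*z1 + (2)*x1*z2 + (2)*x1*z3 + (-1)*x1*y1 + (-1)*x1*y1*z1 + (2)*x1*y2 + (1)*x1*y2*z2 + (1)*x1*y2*z3 + (2)*x1*y3 + (1)*x1*y3*z2 + (1)*x1*y3*z3 + (-4)*x2 + (2)*x2*z1 + (-1)*x2*z2 + (-1)*x2*z3 + (2)*x2*y1 + (1)*x2*y1*z2 + (1)*x2*y1*z3 + (-1)*x2*y2 + (1)*x2*y2*z1 + (1)*x2*y2*z2 + (-1)*x2*y2*z3 + (-1)*x2*y3 + (1)*x2*y3*z1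 + (-1)*x2*y3*z2 + (1)*x2*y3*z3 + (-3)*x3 + (2)*x3*z1 + (-1)*x3*z2 + (2)*x3*y1 + (1)*x3*y1*z2 + (1)*x3*y1*z3 + (-1)*x3*y2 + (1)*x3*y2*z1 + (-1)*x3*y2*z2 + (1)*x3*y2*z3 + (1)*x3*y3*z1 + (1)*x3*y3*z2 ≤ 12 := by
  rcases hx1 with h1|h1 <;> rcases hy1 with h2|h2 <;> rcases hz1 with h3|h3 <;>
    rcases hx2 with h4|h4 <;> rcases hy2 with h5|h5 <;> rcases hz2 with h6|h6 <;>
    rcases hx3 with h7|h7 <;> rcases hy3 with h8|h8 <;> rcases hz3 with h9|h9 <;>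
    subst h1 h2 h3 h4 h5 h6 h7 h8 h9 <;> norm_num

/-- Generalization number 532 of the I3322 inequality:
`3(100) − (110) − (111) − 4(200) + 2(210) − (220) + (221) + (222) − 3(300)
 + 2(310) − (320) + (321) − (322) + (331) + (332) ≤ 12`
holds for deterministic ±1 assignments (with trivial setting `0` fixed to `+1`). -/
theorem i3322_gen_532
    (a b c : ℕ → ℝ)
    (ha0 : a 0 = 1) (hb0 : b 0 = 1) (hc0 : c 0 = 1)
    (h : ∀ i, 1 ≤ i → i ≤ 3 →
      (a i = 1 ∨ a i = -1) ∧ (b i = 1 ∨ b i = -1) ∧ (c i = 1 ∨ c i = -1)) :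
    3 * symCorr a b c 1 0 0 - symCorr a b c 1 1 0 - symCorr a b c 1 1 1
      - 4 * symCorr a b c 2 0 0 + 2 * symCorr a b c 2 1 0 - symCorr a b c 2 2 0
      + symCorr a b c 2 2 1 + symCorr a b c 2 2 2 - 3 * symCorr a b c 3 0 0
      + 2 * symCorr a b c 3 1 0 - symCorr a b c 3 2 0 + symCorr a b c 3 2 1
      - symCorr a b c 3 2 2 + symCorr a b c 3 3 1 + symCorr a b c 3 3 2 ≤ 12 := by
  obtain ⟨ha1, hb1, hc1⟩ := h 1 (by norm_num) (by norm_num)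
  obtain ⟨ha2, hb2, hc2⟩ := h 2 (by norm_num) (by norm_num)
  obtain ⟨ha3, hb3, hc3⟩ := h 3 (by norm_num) (by norm_num)
  have key := key532 (a 1) (a 2) (a 3) (b 1) (b 2) (b 3) (c 1) (c 2) (c 3)
    ha1 hb1 hc1 ha2 hb2 hc2 ha3 hb3 hc3
  rw [sc100, sc110, sc111, sc200, sc210, sc220, sc221, sc222, sc300, sc310,
    sc320, sc321, sc322, sc331, sc332, ha0, hb0, hc0]
  linarith
end

section
/- For all real numbers aᵢ, bᵢ, cᵢ ∈ {−1, 1} (i = 1, 2, 3, 4), with the convention a₀ = b₀ = c₀ = 1, the following inequality holds: −(100) − 2(110) − (200) − 2(210) − 2(220) + (300) − (310) − (320) + (330) + (331) + (332) − 3(333) + 2(441) − 2(442) ≤ 15. -/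
private def pm (t : Bool) : ℤ := bif t then 1 else -1

private lemma pm_cases (x : ℝ) (hx : x = 1 ∨ x = -1) : ∃ t : Bool, x = (pm t : ℤ) := by
  rcases hx with h | h
  · exact ⟨true, by simp [pm, h]⟩
  · exact ⟨false, by simp [pm, h]⟩

private lemma key : ∀ t1 t2 t3 t4 t5 t6 t7 t8 t9 t10 t11 t12 : Bool,
    (fun a1 a2 a3 a4 b1 b2 b3 b4 c1 c2 c3 c4 : ℤ =>
      -c1 + -b1 + -a1 - 2 * (a1 * b1 + (a1 * c1 + b1 * c1)) - (a2 + (b2 + c2)) -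
            2 * (a2 * b1 + (a2 * c1 + (a1 * b2 + (a1 * c2 + (b2 * c1 + b1 * c2))))) -
            2 * (a2 * b2 + (a2 * c2 + b2 * c2)) + (a3 + (b3 + c3)) -
            (a3 * b1 + (a3 * c1 + (a1 * b3 + (a1 * c3 + (b3 * c1 + b1 * c3))))) -
            (a3 * b2 + (a3 * c2 + (a2 * b3 + (a2 * c3 + (b3 * c2 + b2 * c3))))) +
            (a3 * b3 + (a3 * c3 + b3 * c3)) +
            (a3 * b3 * c1 + (a3 * b1 * c3 + a1 * b3 * c3)) +
            (a3 * b3 * c2 + (a3 * b2 * c3 + a2 * b3 * c3)) -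
            3 * (a3 * b3 * c3) +
            2 * (a4 * b4 * c1 + (a4 * b1 * c4 + a1 * b4 * c4)) ≤
          15 + 2 * (a4 * b4 * c2 + (a4 * b2 * c4 + a2 * b4 * c4)))
      (pm t1) (pm t2) (pm t3) (pm t4) (pm t5) (pm t6) (pm t7) (pm t8)
      (pm t9) (pm t10) (pm t11) (pm t12) := by decide

/-- Generalization number 1 of the I4422 inequality to three parties:
`−(100) − 2(110) − (200) − 2(210) − 2(220) + (300) − (310) − (320) + (330)
 + (331) + (332) − 3(333) + 2(441) − 2(442) ≤ 15`
holds for deterministic ±1 assignments (with trivial setting `0` fixed to `+1`). -/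
theorem i4422_gen_1
    (a b c : ℕ → ℝ)
    (ha0 : a 0 = 1) (hb0 : b 0 = 1) (hc0 : c 0 = 1)
    (h : ∀ i, 1 ≤ i → i ≤ 4 →
      (a i = 1 ∨ a i = -1) ∧ (b i = 1 ∨ b i = -1) ∧ (c i = 1 ∨ c i = -1)) :
    -symCorr a b c 1 0 0 - 2 * symCorr a b c 1 1 0 - symCorr a b c 2 0 0
      - 2 * symCorr a b c 2 1 0 - 2 * symCorr a b c 2 2 0 + symCorr a b c 3 0 0
      - symCorr a b c 3 1 0 - symCorr a b c 3 2 0 + symCorr a b c 3 3 0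
      + symCorr a b c 3 3 1 + symCorr a b c 3 3 2 - 3 * symCorr a b c 3 3 3
      + 2 * symCorr a b c 4 4 1 - 2 * symCorr a b c 4 4 2 ≤ 15 := by
  obtain ⟨ha1, hb1, hc1⟩ := h 1 (by norm_num) (by norm_num)
  obtain ⟨ha2, hb2, hc2⟩ := h 2 (by norm_num) (by norm_num)
  obtain ⟨ha3, hb3, hc3⟩ := h 3 (by norm_num) (by norm_num)
  obtain ⟨ha4, hb4, hc4⟩ := h 4 (by norm_num) (by norm_num)
  obtain ⟨t1, e1⟩ := pm_cases _ ha1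
  obtain ⟨t2, e2⟩ := pm_cases _ ha2
  obtain ⟨t3, e3⟩ := pm_cases _ ha3
  obtain ⟨t4, e4⟩ := pm_cases _ ha4
  obtain ⟨t5, e5⟩ := pm_cases _ hb1
  obtain ⟨t6, e6⟩ := pm_cases _ hb2
  obtain ⟨t7, e7⟩ := pm_cases _ hb3
  obtain ⟨t8, e8⟩ := pm_cases _ hb4
  obtain ⟨t9, e9⟩ := pm_cases _ hc1
  obtain ⟨t10, e10⟩ := pm_cases _ hc2
  obtain ⟨t11, e11⟩ := pm_cases _ hc3
  obtain ⟨t12, e12⟩ := pm_cases _ hc4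
  simp only [symCorr]
  norm_num [Finset.sum_insert, Finset.mem_insert, ha0, hb0, hc0]
  rw [e1, e2, e3, e4, e5, e6, e7, e8, e9, e10, e11, e12]
  exact_mod_cast key t1 t2 t3 t4 t5 t6 t7 t8 t9 t10 t11 t12
end

section
/- For all real numbers aᵢ, bᵢ, cᵢ ∈ {−1, 1} (i = 1, 2, 3, 4), with the convention a₀ = b₀ = c₀ = 1, the following inequality holds: 3(100) − 3(110) + 2(111) + 3(200) − 3(210) − 3(220) + 2(221) + (300) − (310) + (311) − (320) + (321) + (322) + (330) − (331) − (332) + (333) − 4(441) + 4(442) ≤ 23. -/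
def sgn (x : Bool) : ℤ := if x then 1 else -1

def Fint (a1 a2 a3 a4 b1 b2 b3 b4 c1 c2 c3 c4 : ℤ) : ℤ :=
  (3)*a1 + (-3)*a1*b1 + (2)*a1*b1*c1 + (1)*a1*b1*c3 + (-3)*a1*b2 + (2)*a1*b2*c2 + (1)*a1*b2*c3 + (-1)*a1*b3 + (1)*a1*b3*c1 + (1)*a1*b3*c2 + (-1)*a1*b3*c3 + (-4)*a1*b4*c4 + (-3)*a1*c1 + (-3)*a1*c2 + (-1)*a1*c3 + (3)*a2 + (-3)*a2*b1 + (2)*a2*b1*c2 + (1)*a2*b1*c3 + (-3)*a2*b2 + (2)*a2*b2*c1 + (1)*a2*b2*c3 + (-1)*a2*b3 + (1)*a2*b3*c1 + (1)*a2*b3*c2 + (-1)*a2*b3*c3 + (4)*a2*b4*c4 + (-3)*a2*c1 + (-3)*a2*c2 + (-1)*a2*c3 + (1)*a3 + (-1)*a3*b1 + (1)*a3*b1*c1 + (1)*a3*b1*c2 + (-1)*a3*b1*c3 + (-1)*a3*b2 + (1)*a3*b2*c1 + (1)*a3*b2*c2 + (-1)*a3*b2*c3 + (1)*a3*b3 +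 (-1)*a3*b3*c1 + (-1)*a3*b3*c2 + (1)*a3*b3*c3 + (-1)*a3*c1 + (-1)*a3*c2 + (1)*a3*c3 + (-4)*a4*b1*c4 + (4)*a4*b2*c4 + (-4)*a4*b4*c1 + (4)*a4*b4*c2 + (3)*b1 + (-3)*b1*c1 + (-3)*b1*c2 + (-1)*b1*c3 + (3)*b2 + (-3)*b2*c1 + (-3)*b2*c2 + (-1)*b2*c3 + (1)*b3 + (-1)*b3*c1 + (-1)*b3*c2 + (1)*b3*c3 + (3)*c1 + (3)*c2 + (1)*c3

set_option maxHeartbeats 2000000 in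
lemma keyB : ∀ ua1 ua2 ua3 ua4 ub1 ub2 ub3 ub4 uc1 uc2 uc3 uc4 : Bool, Fint (sgn ua1) (sgn ua2) (sgn ua3) (sgn ua4) (sgn ub1) (sgn ub2) (sgn ub3) (sgn ub4) (sgn uc1) (sgn uc2) (sgn uc3) (sgn uc4) ≤ 23 := by decide

lemma key_s19 (a1 a2 a3 a4 b1 b2 b3 b4 c1 c2 c3 c4 : ℝ) (ha1 : a1 = 1 ∨ a1 = -1) (ha2 : a2 = 1 ∨ a2 = -1) (ha3 : a3 = 1 ∨ a3 = -1) (ha4 : a4 = 1 ∨ a4 = -1) (hb1 : b1 = 1 ∨ b1 = -1) (hb2 : b2 = 1 ∨ b2 = -1) (hb3 : b3 = 1 ∨ b3 = -1) (hb4 : b4 = 1 ∨ b4 = -1) (hc1 : c1 = 1 ∨ c1 = -1) (hc2 : c2 = 1 ∨ c2 = -1) (hc3 : c3 = 1 ∨ c3 = -1) (hc4 : c4 = 1 ∨ c4 = -1) :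
    (3)*a1 + (-3)*a1*b1 + (2)*a1*b1*c1 + (1)*a1*b1*c3 + (-3)*a1*b2 + (2)*a1*b2*c2 + (1)*a1*b2*c3 + (-1)*a1*b3 + (1)*a1*b3*c1 + (1)*a1*b3*c2 + (-1)*a1*b3*c3 + (-4)*a1*b4*c4 + (-3)*a1*c1 + (-3)*a1*c2 + (-1)*a1*c3 + (3)*a2 + (-3)*a2*b1 + (2)*a2*b1*c2 + (1)*a2*b1*c3 + (-3)*a2*b2 + (2)*a2*b2*c1 + (1)*a2*b2*c3 + (-1)*a2*b3 + (1)*a2*b3*c1 + (1)*a2*b3*c2 + (-1)*a2*b3*c3 + (4)*a2*b4*c4 + (-3)*a2*c1 + (-3)*a2*c2 + (-1)*a2*c3 + (1)*a3 + (-1)*a3*b1 + (1)*a3*b1*c1 + (1)*a3*b1*c2 + (-1)*a3*b1*c3 + (-1)*a3*b2 + (1)*a3*b2*c1 + (1)*a3*b2*c2 + (-1)*a3*b2*c3 + (1)*a3*b3 + (-1)*a3*b3*c1 + (-1)*a3*b3*c2 + (1)*a3*b3*c3 + (-1)*a3*c1 + (-1)*a3*c2 + (1)*a3*c3 + (-4)*a4*b1*c4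 + (4)*a4*b2*c4 + (-4)*a4*b4*c1 + (4)*a4*b4*c2 + (3)*b1 + (-3)*b1*c1 + (-3)*b1*c2 + (-1)*b1*c3 + (3)*b2 + (-3)*b2*c1 + (-3)*b2*c2 + (-1)*b2*c3 + (1)*b3 + (-1)*b3*c1 + (-1)*b3*c2 + (1)*b3*c3 + (3)*c1 + (3)*c2 + (1)*c3 ≤ 23 := by
  have pick : ∀ x : ℝ, x = 1 ∨ x = -1 → ∃ u : Bool, x = ((sgn u : ℤ) : ℝ) := by
    rintro x (rfl|rfl)
    · exact ⟨true, by simp [sgn]⟩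
    · exact ⟨false, by simp [sgn]⟩
  obtain ⟨ua1, rfl⟩ := pick _ ha1
  obtain ⟨ua2, rfl⟩ := pick _ ha2
  obtain ⟨ua3, rfl⟩ := pick _ ha3
  obtain ⟨ua4, rfl⟩ := pick _ ha4
  obtain ⟨ub1, rfl⟩ := pick _ hb1
  obtain ⟨ub2, rfl⟩ := pick _ hb2
  obtain ⟨ub3, rfl⟩ := pick _ hb3
  obtain ⟨ub4, rfl⟩ := pick _ hb4
  obtain ⟨uc1, rfl⟩ := pick _ hc1
  obtain ⟨uc2, rfl⟩ := pick _ hc2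
  obtain ⟨uc3, rfl⟩ := pick _ hc3
  obtain ⟨uc4, rfl⟩ := pick _ hc4
  have := keyB ua1 ua2 ua3 ua4 ub1 ub2 ub3 ub4 uc1 uc2 uc3 uc4
  simp only [Fint] at this
  exact_mod_cast this

/-- Generalization number 5 of the I4422 inequality to three parties:
`3(100) − 3(110) + 2(111) + 3(200) − 3(210) − 3(220) + 2(221) + (300) − (310)
 + (311) − (320) + (321) + (322) + (330) − (331) − (332) + (333)
 − 4(441) + 4(442) ≤ 23`
holds for deterministic ±1 assignments (with trivial setting `0` fixed to `+1`). -/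
theorem i4422_gen_5
    (a b c : ℕ → ℝ)
    (ha0 : a 0 = 1) (hb0 : b 0 = 1) (hc0 : c 0 = 1)
    (h : ∀ i, 1 ≤ i → i ≤ 4 →
      (a i = 1 ∨ a i = -1) ∧ (b i = 1 ∨ b i = -1) ∧ (c i = 1 ∨ c i = -1)) :
    3 * symCorr a b c 1 0 0 - 3 * symCorr a b c 1 1 0 + 2 * symCorr a b c 1 1 1
      + 3 * symCorr a b c 2 0 0 - 3 * symCorr a b c 2 1 0 - 3 * symCorr a b c 2 2 0
      + 2 * symCorr a b c 2 2 1 + symCorr a b c 3 0 0 - symCorr a b c 3 1 0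
      + symCorr a b c 3 1 1 - symCorr a b c 3 2 0 + symCorr a b c 3 2 1
      + symCorr a b c 3 2 2 + symCorr a b c 3 3 0 - symCorr a b c 3 3 1
      - symCorr a b c 3 3 2 + symCorr a b c 3 3 3
      - 4 * symCorr a b c 4 4 1 + 4 * symCorr a b c 4 4 2 ≤ 23 := by
  obtain ⟨ha1, hb1, hc1⟩ := h 1 (by norm_num) (by norm_num)
  obtain ⟨ha2, hb2, hc2⟩ := h 2 (by norm_num) (by norm_num)
  obtain ⟨ha3, hb3, hc3⟩ := h 3 (by norm_num) (by norm_num)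
  obtain ⟨ha4, hb4, hc4⟩ := h 4 (by norm_num) (by norm_num)
  have hk := key_s19 (a 1) (a 2) (a 3) (a 4) (b 1) (b 2) (b 3) (b 4) (c 1) (c 2) (c 3) (c 4)
    ha1 ha2 ha3 ha4 hb1 hb2 hb3 hb4 hc1 hc2 hc3 hc4
  simp only [symCorr, Finset.sum_insert, Finset.mem_insert, Finset.mem_singleton,
    Finset.sum_singleton, Prod.mk.injEq]
  norm_num [ha0, hb0, hc0]
  linarith [hk]
end
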